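/- Let F : U × D → ℝ, with U ⊆ ℝ^d open and D the closed unit disk in ℝ^{m−d}, be continuous on U × D, C^1 on U × (D ∖ {0}), with F(x, 0) = 0 for all x ∈ U. Suppose (i) the radial partial derivatives ∂F/∂u_k(x', u') → 0 as (x', u') → (x, 0) for every x ∈ U, and (ii) there exists a continuous map c : U × [0, a) → D with c(x,0) = 0, |c(x,t)| = t, C^1 for t > 0, with all derivatives ∂c_k/∂x_j bounded on U × (0, a), and (iii) |∂F/∂x_1(x, c(x,t))| > ε₁ > 0 for all (x,t) ∈ U × (0, a). Then setting φ(x,t) = F(x, c(x,t)), there exist a connected open U' ⊆ U and 0 < a' < a such that |∂φ/∂x_1(x,t)| > ε₁/2 on U' × (0, a'), and this leads to a contradiction with φ(x, 0) = 0; hence hypotheses (i)–(iii) are jointly inconsistent. -/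

import Mathlib

open Set Topology Filter MeasureTheory Function

noncomputable section

/-- Semialgebraic subsets of `ℝ^m` (finite boolean combinations of polynomial
equalities and inequalities). -/
inductive IsSA : ∀ {m : ℕ}, Set (Fin m → ℝ) → Prop
  | pos {m : ℕ} (p : MvPolynomial (Fin m) ℝ) : IsSA {x | 0 < MvPolynomial.eval x p}
  | zero {m : ℕ} (p : MvPolynomial (Fin m) ℝ) : IsSA {x | MvPolynomial.eval x p = 0}
  | union {m : ℕ} {s t : Set (Fin m → ℝ)} : IsSA s → IsSA t → IsSA (s ∪ t)
  | compl {m : ℕ} {s : Set (Fin m → ℝ)} : IsSA s → IsSA sᶜ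

/-- Identification `ℝ^(m+n) ≃ ℝ^m × ℝ^n`. -/
def pairEquiv (m n : ℕ) : (Fin (m + n) → ℝ) ≃ (Fin m → ℝ) × (Fin n → ℝ) :=
  (Equiv.arrowCongr finSumFinEquiv.symm (Equiv.refl ℝ)).trans
    (Equiv.sumArrowEquivProdArrow _ _ ℝ)

/-- The Euclidean norm on `ℝ^n`. -/
def euclNorm {n : ℕ} (u : Fin n → ℝ) : ℝ := Real.sqrt (∑ i, u i ^ 2)

/-- Euclidean closed disk. -/
def euclDisk {m : ℕ} (c : Fin m → ℝ) (r : ℝ) : Set (Fin m → ℝ) := {x | euclNorm (x - c) ≤ r}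

/-- Locally semialgebraic set (the paper's convention of "semialgebraic"). -/
def IsLSA {m : ℕ} (X : Set (Fin m → ℝ)) : Prop :=
  ∀ (c : Fin m → ℝ) (r : ℝ), IsSA (X ∩ euclDisk c r)

/-- The graph of `f` over `X`, as a subset of `ℝ^(m+n)`. -/
def graphSet {m n : ℕ} (X : Set (Fin m → ℝ)) (f : (Fin m → ℝ) → Fin n → ℝ) :
    Set (Fin (m + n) → ℝ) :=
  {z | (pairEquiv m n z).1 ∈ X ∧ f (pairEquiv m n z).1 = (pairEquiv m n z).2}

/-- Semialgebraic map on `X` (graph is semialgebraic). -/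
def IsSAMapOn {m n : ℕ} (X : Set (Fin m → ℝ)) (f : (Fin m → ℝ) → Fin n → ℝ) : Prop :=
  IsSA (graphSet X f)

/-- Locally semialgebraic map on `X`. -/
def IsLSAMapOn {m n : ℕ} (X : Set (Fin m → ℝ)) (f : (Fin m → ℝ) → Fin n → ℝ) : Prop :=
  ∀ X' ⊆ X, IsSA X' → IsCompact X' → IsSAMapOn X' f

/-- The closed geometric simplex spanned by a finite vertex set. -/
def simplexOf {N : ℕ} (σ : Finset (Fin N → ℝ)) : Set (Fin N → ℝ) := convexHull ℝ ↑σ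

/-- Local finiteness of a simplicial complex. -/
def LocFinComplex {N : ℕ} (K : Geometry.SimplicialComplex ℝ (Fin N → ℝ)) : Prop :=
  ∀ x : Fin N → ℝ, ∃ U : Set (Fin N → ℝ), IsOpen U ∧ x ∈ U ∧
    {σ | σ ∈ K.faces ∧ (simplexOf σ ∩ U).Nonempty}.Finite

/-- `f` is of class `C^1` on each closed simplex of `K`: on every closed simplex it
extends to a `C^1` map on an open neighborhood. -/
def C1OnSimplices {N m : ℕ} (K : Geometry.SimplicialComplex ℝ (Fin N → ℝ))
    (f : (Fin N → ℝ) → Fin m → ℝ) : Prop :=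
  ∀ σ ∈ K.faces, ∃ (U : Set (Fin N → ℝ)) (g : (Fin N → ℝ) → Fin m → ℝ),
    IsOpen U ∧ simplexOf σ ⊆ U ∧ ContDiffOn ℝ 1 g U ∧ EqOn f g (simplexOf σ)

/-- A semialgebraic triangulation of `X ⊆ ℝ^m`: a locally finite simplicial complex `K`
realized in `ℝ^N` together with a semialgebraic homeomorphism `f : |K| → X`. -/
structure SATriangulation {m : ℕ} (X : Set (Fin m → ℝ)) (N : ℕ) where
  K : Geometry.SimplicialComplex ℝ (Fin N → ℝ)
  f : (Fin N → ℝ) → Fin m → ℝ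
  locFin : LocFinComplex K
  bij : Set.BijOn f K.space X
  cont : ContinuousOn f K.space
  inv_cont : ContinuousOn (Function.invFunOn f K.space) X
  sa : IsLSAMapOn K.space f

lemma continuous_euclNorm {n : ℕ} : Continuous (euclNorm (n := n)) := by
  have h : Continuous fun u : Fin n → ℝ => ∑ i, u i ^ 2 :=
    continuous_finset_sum _ fun i _ => (continuous_apply i).pow 2
  exact Real.continuous_sqrt.comp h

lemma euclNorm_zero {n : ℕ} : euclNorm (0 : Fin n → ℝ) = 0 := by
  simp [euclNorm]


theorem steps_four_to_six {d e : ℕ} (U : Set (Fin (d + 1) → ℝ)) (a ε₁ : ℝ)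
    (hU : IsOpen U) (hconn : IsConnected U) (ha : 0 < a) (hε₁ : 0 < ε₁)
    (F : (Fin (d + 1) → ℝ) → (Fin e → ℝ) → ℝ)
    (hFc : ContinuousOn (fun z : (Fin (d + 1) → ℝ) × (Fin e → ℝ) => F z.1 z.2)
      (U ×ˢ euclDisk 0 1))
    (hFC1 : ContDiffOn ℝ 1 (fun z : (Fin (d + 1) → ℝ) × (Fin e → ℝ) => F z.1 z.2)
      (U ×ˢ (euclDisk 0 1 \ {0})))
    (hF0 : ∀ x ∈ U, F x 0 = 0)
    -- (i) the radial partial derivatives tend to `0`: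
    (hrad : ∀ x ∈ U, ∀ k : Fin e,
      Filter.Tendsto (fun z : (Fin (d + 1) → ℝ) × (Fin e → ℝ) =>
          fderiv ℝ (F z.1) z.2 (Pi.single k 1))
        (nhdsWithin (x, 0) (U ×ˢ (euclDisk 0 1 \ {0}))) (nhds 0))
    -- (ii) the curve selection data with bounded derivatives:
    (c : (Fin (d + 1) → ℝ) → ℝ → Fin e → ℝ)
    (hcc : ContinuousOn (fun p : (Fin (d + 1) → ℝ) × ℝ => c p.1 p.2) (U ×ˢ Set.Ico 0 a))
    (hc0 : ∀ x ∈ U, c x 0 = 0)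
    (hcn : ∀ x ∈ U, ∀ t ∈ Set.Ico 0 a, euclNorm (c x t) = t)
    (hcD : ∀ x ∈ U, ∀ t ∈ Set.Ico 0 a, c x t ∈ euclDisk 0 1)
    (hcC1 : ContDiffOn ℝ 1 (fun p : (Fin (d + 1) → ℝ) × ℝ => c p.1 p.2) (U ×ˢ Set.Ioo 0 a))
    (B : ℝ) (hB : ∀ x ∈ U, ∀ t ∈ Set.Ioo 0 a, ∀ (j : Fin (d + 1)) (k : Fin e),
      |fderiv ℝ (fun y => c y t k) x (Pi.single j 1)| ≤ B)
    -- (iii) the uniform lower bound on `|∂F/∂x₁(x, c(x,t))|`: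
    (hlb : ∀ x ∈ U, ∀ t ∈ Set.Ioo 0 a,
      ε₁ < |fderiv ℝ (fun y => F y (c x t)) x (Pi.single 0 1)|) :
    False := by
  classical
  obtain ⟨⟨x₀, hx₀U⟩, hpreconn⟩ := id hconn
  -- rule out `a > 1`
  rcases lt_or_ge 1 a with h1a | ha1
  · have htI : (1 + a) / 2 ∈ Set.Ico 0 a := ⟨by linarith, by linarith⟩
    have h1 := hcn x₀ hx₀U _ htI
    have h2 := hcD x₀ hx₀U _ htI
    simp only [euclDisk, Set.mem_setOf_eq, sub_zero] at h2
    rw [h1] at h2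
    linarith
  -- notation
  set e₁ : Fin (d + 1) → ℝ := Pi.single 0 1 with he₁def
  set Ft : (Fin (d + 1) → ℝ) × (Fin e → ℝ) → ℝ := fun z => F z.1 z.2 with hFtdef
  set S : Set ((Fin (d + 1) → ℝ) × (Fin e → ℝ)) :=
    U ×ˢ ({u | euclNorm u < 1} ∩ {0}ᶜ) with hSdef
  have hSopen : IsOpen S :=
    hU.prod ((isOpen_lt continuous_euclNorm continuous_const).inter isOpen_compl_singleton)
  have hSsub : S ⊆ U ×ˢ (euclDisk 0 1 \ {0}) := by
    rintro ⟨x, u⟩ ⟨hx, hu1, hu2⟩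
    exact ⟨hx, by simpa [euclDisk] using le_of_lt hu1, hu2⟩
  have hFtC1 : ContDiffOn ℝ 1 Ft S := hFC1.mono hSsub
  have hFtdiff : ∀ p ∈ S, DifferentiableAt ℝ Ft p := fun p hp =>
    ((hFtC1.differentiableOn one_ne_zero) p hp).differentiableAt (hSopen.mem_nhds hp)
  have hmemS : ∀ x ∈ U, ∀ t ∈ Set.Ioo 0 a, (x, c x t) ∈ S := by
    intro x hx t ht
    have hn := hcn x hx t ⟨ht.1.le, ht.2⟩
    refine ⟨hx, ?_, ?_⟩
    · simpa [Set.mem_setOf_eq, hn] using lt_of_lt_of_le ht.2 ha1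
    · simp only [Set.mem_compl_iff, Set.mem_singleton_iff]
      intro h0
      rw [h0, euclNorm_zero] at hn
      exact absurd hn.symm (ne_of_gt ht.1)
  -- partial derivatives of `Ft`
  have hpart1 : ∀ x u, (x, u) ∈ S → HasFDerivAt (fun y => F y u)
      ((fderiv ℝ Ft (x, u)).comp
        (ContinuousLinearMap.inl ℝ (Fin (d + 1) → ℝ) (Fin e → ℝ))) x :=
    fun x u hp => ((hFtdiff (x, u) hp).hasFDerivAt.comp x (hasFDerivAt_prodMk_left (𝕜 := ℝ) x u) :)
  have hpart2 : ∀ x u, (x, u) ∈ S → HasFDerivAt (F x)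
      ((fderiv ℝ Ft (x, u)).comp
        (ContinuousLinearMap.inr ℝ (Fin (d + 1) → ℝ) (Fin e → ℝ))) u :=
    fun x u hp => ((hFtdiff (x, u) hp).hasFDerivAt.comp u (hasFDerivAt_prodMk_right x u) :)
  -- the chain rule for `x ↦ F x (c x t)`
  have key : ∀ x ∈ U, ∀ t ∈ Set.Ioo 0 a,
      ∃ D : (Fin (d + 1) → ℝ) →L[ℝ] ℝ,
        HasFDerivAt (fun y => F y (c y t)) D x ∧
        D e₁ = fderiv ℝ (fun y => F y (c x t)) x e₁ +
          ∑ k : Fin e, fderiv ℝ (fun y => c y t k) x e₁ *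
            fderiv ℝ (F x) (c x t) (Pi.single k 1) := by
    intro x hx t ht
    have hpS := hmemS x hx t ht
    have hxt : (x, t) ∈ U ×ˢ Set.Ioo 0 a := ⟨hx, ht⟩
    have hcdiff : DifferentiableAt ℝ (fun p : (Fin (d + 1) → ℝ) × ℝ => c p.1 p.2) (x, t) :=
      ((hcC1.differentiableOn one_ne_zero) (x, t) hxt).differentiableAt
        ((hU.prod isOpen_Ioo).mem_nhds hxt)
    set M : (Fin (d + 1) → ℝ) →L[ℝ] (Fin e → ℝ) :=
      (fderiv ℝ (fun p : (Fin (d + 1) → ℝ) × ℝ => c p.1 p.2) (x, t)).comp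
        (ContinuousLinearMap.inl ℝ (Fin (d + 1) → ℝ) ℝ) with hMdef
    have hM : HasFDerivAt (fun y => c y t) M x :=
      (hcdiff.hasFDerivAt.comp x (hasFDerivAt_prodMk_left (𝕜 := ℝ) x t) :)
    have hMk : ∀ k : Fin e, fderiv ℝ (fun y => c y t k) x e₁ = M e₁ k := by
      intro k
      have hk : HasFDerivAt (fun y => c y t k)
          ((ContinuousLinearMap.proj k : (Fin e → ℝ) →L[ℝ] ℝ).comp M) x :=
        (ContinuousLinearMap.proj k : (Fin e → ℝ) →L[ℝ] ℝ).hasFDerivAt.comp x hM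
      rw [hk.fderiv]
      rfl
    have hG : HasFDerivAt (fun y : Fin (d + 1) → ℝ => (y, c y t))
        ((ContinuousLinearMap.id ℝ (Fin (d + 1) → ℝ)).prod M) x :=
      (hasFDerivAt_id x).prodMk hM
    set DF := fderiv ℝ Ft (x, c x t) with hDFdef
    have hφ : HasFDerivAt (fun y => F y (c y t))
        (DF.comp ((ContinuousLinearMap.id ℝ (Fin (d + 1) → ℝ)).prod M)) x :=
      ((hFtdiff _ hpS).hasFDerivAt.comp x hG :)
    refine ⟨_, hφ, ?_⟩
    have estep : (DF.comp ((ContinuousLinearMap.id ℝ (Fin (d + 1) → ℝ)).prod M)) e₁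
        = DF (e₁, M e₁) := rfl
    have esplit : ((e₁, M e₁) : (Fin (d + 1) → ℝ) × (Fin e → ℝ))
        = (e₁, (0 : Fin e → ℝ)) + ((0 : Fin (d + 1) → ℝ), M e₁) := by
      simp [Prod.ext_iff]
    have e2 : fderiv ℝ (fun y => F y (c x t)) x e₁ = DF (e₁, (0 : Fin e → ℝ)) := by
      rw [(hpart1 x (c x t) hpS).fderiv]
      rfl
    have hw : M e₁ = ∑ k : Fin e, M e₁ k • (Pi.single k 1 : Fin e → ℝ) := by
      funext j
      simp [Pi.single_apply, Finset.sum_apply]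
    have e3 : DF ((0 : Fin (d + 1) → ℝ), M e₁)
        = ∑ k : Fin e, fderiv ℝ (fun y => c y t k) x e₁ *
            fderiv ℝ (F x) (c x t) (Pi.single k 1) := by
      have h0 : DF ((0 : Fin (d + 1) → ℝ), M e₁)
          = (DF.comp (ContinuousLinearMap.inr ℝ (Fin (d + 1) → ℝ) (Fin e → ℝ))) (M e₁) := rfl
      rw [h0, hw, map_sum]
      refine Finset.sum_congr rfl fun k _ => ?_
      rw [_root_.map_smul, hMk k, (hpart2 x (c x t) hpS).fderiv]
      simp [smul_eq_mul, hDFdef]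
    rw [estep, esplit, map_add, e2, e3]
  -- sign of `∂F/∂x₁(x, c (x,t))` is constant
  set P : Set ((Fin (d + 1) → ℝ) × ℝ) := U ×ˢ Set.Ioo 0 a with hPdef
  set h : (Fin (d + 1) → ℝ) × ℝ → ℝ :=
    fun q => fderiv ℝ (fun y => F y (c q.1 q.2)) q.1 e₁ with hhdef
  have hgcont : ContinuousOn (fun q : (Fin (d + 1) → ℝ) × ℝ => (q.1, c q.1 q.2)) P :=
    continuousOn_fst.prodMk (hcc.mono (Set.prod_mono_right Set.Ioo_subset_Ico_self))
  have hgmaps : Set.MapsTo (fun q : (Fin (d + 1) → ℝ) × ℝ => (q.1, c q.1 q.2)) P S :=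
    fun q hq => hmemS q.1 hq.1 q.2 hq.2
  have hΛcont : ContinuousOn (fun z => fderiv ℝ Ft z ((e₁, (0 : Fin e → ℝ)))) S := by
    have h1 := hFtC1.continuousOn_fderiv_of_isOpen hSopen le_rfl
    exact (ContinuousLinearMap.apply ℝ ℝ
      ((e₁, (0 : Fin e → ℝ)))).continuous.comp_continuousOn h1
  have hheq : Set.EqOn h ((fun z => fderiv ℝ Ft z ((e₁, (0 : Fin e → ℝ)))) ∘
      fun q : (Fin (d + 1) → ℝ) × ℝ => (q.1, c q.1 q.2)) P := by
    intro q hq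
    show fderiv ℝ (fun y => F y (c q.1 q.2)) q.1 e₁ = _
    rw [(hpart1 q.1 (c q.1 q.2) (hgmaps hq)).fderiv]
    rfl
  have hhcont : ContinuousOn h P := (hΛcont.comp hgcont hgmaps).congr hheq
  have hPconn : IsConnected P := hconn.prod ⟨nonempty_Ioo.2 ha, isPreconnected_Ioo⟩
  obtain ⟨s, hs1, hslb⟩ : ∃ s : ℝ, |s| = 1 ∧ ∀ x ∈ U, ∀ t ∈ Set.Ioo 0 a,
      ε₁ < s * fderiv ℝ (fun y => F y (c x t)) x e₁ := by
    by_cases hpos : ∀ q ∈ P, 0 < h q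
    · refine ⟨1, abs_one, fun x hx t ht => ?_⟩
      have h1 := hlb x hx t ht
      have h2 := hpos (x, t) ⟨hx, ht⟩
      rw [show h (x, t) = fderiv ℝ (fun y => F y (c x t)) x e₁ from rfl] at h2
      rw [abs_of_pos h2] at h1
      simpa using h1
    · have hneg : ∀ q ∈ P, h q < 0 := by
        by_contra hcon
        push_neg at hcon
        obtain ⟨q₂, hq₂, hq₂'⟩ := hcon
        push_neg at hpos
        obtain ⟨q₁, hq₁, hq₁'⟩ := hpos
        have h0mem : (0 : ℝ) ∈ Set.Icc (h q₁) (h q₂) := ⟨hq₁', hq₂'⟩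
        obtain ⟨q, hq, hq0⟩ :=
          hPconn.isPreconnected.intermediate_value hq₁ hq₂ hhcont h0mem
        have hcontr := hlb q.1 hq.1 q.2 hq.2
        rw [show fderiv ℝ (fun y => F y (c q.1 q.2)) q.1 e₁ = h q from rfl, hq0] at hcontr
        simp at hcontr
        linarith
      refine ⟨-1, by norm_num, fun x hx t ht => ?_⟩
      have h1 := hlb x hx t ht
      have h2 := hneg (x, t) ⟨hx, ht⟩
      rw [show h (x, t) = fderiv ℝ (fun y => F y (c x t)) x e₁ from rfl] at h2
      rw [abs_of_neg h2] at h1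
      linarith
  -- smallness of the radial derivatives near `(x₀, 0)`
  set C : ℝ := (e : ℝ) * (|B| + 1) with hCdef
  have hC0 : 0 ≤ C := by positivity
  set η : ℝ := ε₁ / (2 * (C + 1)) with hηdef
  have hηpos : 0 < η := by positivity
  have hCη : C * η ≤ ε₁ / 2 := by
    have h1 : η * (2 * (C + 1)) = ε₁ := by
      rw [hηdef]; field_simp
    nlinarith [hηpos.le, hC0]
  have hev : ∀ᶠ z in nhdsWithin ((x₀, (0 : Fin e → ℝ))) (U ×ˢ (euclDisk 0 1 \ {0})),
      ∀ k : Fin e, |fderiv ℝ (F z.1) z.2 (Pi.single k 1)| < η := by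
    rw [eventually_all]
    intro k
    filter_upwards [Metric.tendsto_nhds.mp (hrad x₀ hx₀U k) η hηpos] with z hz
    simpa [Real.dist_eq] using hz
  have hT : Filter.Tendsto (fun q : (Fin (d + 1) → ℝ) × ℝ => (q.1, c q.1 q.2))
      (nhdsWithin (x₀, (0 : ℝ)) P)
      (nhdsWithin (x₀, (0 : Fin e → ℝ)) (U ×ˢ (euclDisk 0 1 \ {0}))) := by
    rw [tendsto_nhdsWithin_iff]
    constructor
    · have hc0' : Filter.Tendsto (fun q : (Fin (d + 1) → ℝ) × ℝ => c q.1 q.2)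
          (nhdsWithin (x₀, (0 : ℝ)) P) (nhds 0) := by
        have h1 := hcc (x₀, 0) ⟨hx₀U, Set.left_mem_Ico.2 ha⟩
        have h2 : nhdsWithin ((x₀ : Fin (d + 1) → ℝ), (0 : ℝ)) P ≤
            nhdsWithin (x₀, 0) (U ×ˢ Set.Ico 0 a) :=
          nhdsWithin_mono _ (Set.prod_mono_right Set.Ioo_subset_Ico_self)
        have h3 : Filter.Tendsto (fun q : (Fin (d + 1) → ℝ) × ℝ => c q.1 q.2)
            (nhdsWithin (x₀, (0 : ℝ)) P) (nhds (c x₀ 0)) := h1.mono_left h2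
        rwa [hc0 x₀ hx₀U] at h3
      exact ((continuous_fst.tendsto _).mono_left nhdsWithin_le_nhds).prodMk_nhds hc0'
    · filter_upwards [self_mem_nhdsWithin] with q hq
      refine ⟨hq.1, hcD q.1 hq.1 q.2 ⟨hq.2.1.le, hq.2.2⟩, ?_⟩
      simp only [Set.mem_singleton_iff]
      intro h0
      have h1 := hcn q.1 hq.1 q.2 ⟨hq.2.1.le, hq.2.2⟩
      rw [h0, euclNorm_zero] at h1
      exact absurd h1.symm (ne_of_gt hq.2.1)
  have hev2 := hT.eventually hev
  obtain ⟨O, hOopen, hOmem, hOsub⟩ := mem_nhdsWithin.mp hev2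
  obtain ⟨ρ, hρpos, hρsub⟩ := Metric.isOpen_iff.mp hOopen _ hOmem
  set δ : ℝ := min ρ a with hδdef
  have hδpos : 0 < δ := lt_min hρpos ha
  have hδa : δ ≤ a := min_le_right _ _
  set V : Set (Fin (d + 1) → ℝ) := U ∩ Metric.ball x₀ ρ with hVdef
  have hVopen : IsOpen V := hU.inter Metric.isOpen_ball
  have hx₀V : x₀ ∈ V := ⟨hx₀U, Metric.mem_ball_self hρpos⟩
  have hgood : ∀ x ∈ V, ∀ t ∈ Set.Ioo 0 δ, ∀ k : Fin e,
      |fderiv ℝ (F x) (c x t) (Pi.single k 1)| < η := by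
    intro x hx t ht k
    have htρ : t < ρ := lt_of_lt_of_le ht.2 (min_le_left _ _)
    have hmem : ((x, t) : (Fin (d + 1) → ℝ) × ℝ) ∈ O ∩ P := by
      refine ⟨hρsub ?_, hx.1, ht.1, lt_of_lt_of_le ht.2 hδa⟩
      rw [← ball_prod_same]
      exact ⟨hx.2, Metric.mem_ball.2 (by rw [Real.dist_eq, sub_zero, abs_of_pos ht.1]; exact htρ)⟩
    exact hOsub hmem k
  -- uniform lower bound on the full derivative near `x₀`
  have hkey2 : ∀ x ∈ V, ∀ t ∈ Set.Ioo 0 δ, ∃ D : (Fin (d + 1) → ℝ) →L[ℝ] ℝ,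
      HasFDerivAt (fun y => F y (c y t)) D x ∧ ε₁ / 2 ≤ s * D e₁ := by
    intro x hx t ht
    have hta : t ∈ Set.Ioo 0 a := ⟨ht.1, lt_of_lt_of_le ht.2 hδa⟩
    obtain ⟨D, hD, hDe⟩ := key x hx.1 t hta
    refine ⟨D, hD, ?_⟩
    have h1 := hslb x hx.1 t hta
    set A := fderiv ℝ (fun y => F y (c x t)) x e₁ with hA
    set R := ∑ k : Fin e, fderiv ℝ (fun y => c y t k) x e₁ *
        fderiv ℝ (F x) (c x t) (Pi.single k 1) with hR
    have hsum : |R| ≤ C * η := by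
      rw [hR]
      calc |∑ k : Fin e, fderiv ℝ (fun y => c y t k) x e₁ *
            fderiv ℝ (F x) (c x t) (Pi.single k 1)|
          ≤ ∑ k : Fin e, |fderiv ℝ (fun y => c y t k) x e₁ *
            fderiv ℝ (F x) (c x t) (Pi.single k 1)| := Finset.abs_sum_le_sum_abs _ _
        _ ≤ ∑ _k : Fin e, (|B| + 1) * η := by
            refine Finset.sum_le_sum fun k _ => ?_
            rw [abs_mul]
            refine mul_le_mul ?_ (le_of_lt (hgood x hx t ht k)) (abs_nonneg _) (by positivity)
            calc |fderiv ℝ (fun y => c y t k) x e₁| ≤ B := hB x hx.1 t hta 0 k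
              _ ≤ |B| := le_abs_self B
              _ ≤ |B| + 1 := by linarith
        _ = C * η := by
            rw [Finset.sum_const, Finset.card_univ, Fintype.card_fin, nsmul_eq_mul, hCdef]
            ring
    have h2 : |s * R| ≤ ε₁ / 2 := by
      rw [abs_mul, hs1, one_mul]
      exact le_trans hsum hCη
    have h3 := neg_abs_le (s * R)
    rw [hDe, mul_add]
    linarith
  -- the segment along `e₁` inside `V`
  obtain ⟨r₀, hr₀pos, hr₀sub⟩ := Metric.isOpen_iff.mp hVopen x₀ hx₀V
  set s₀ : ℝ := r₀ / 2 with hs₀def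
  have hs₀pos : 0 < s₀ := by positivity
  have he₁norm : ‖e₁‖ = 1 := by
    rw [he₁def, Pi.norm_single]
    simp
  have hseg : ∀ ρ' ∈ Set.Icc (0 : ℝ) s₀, x₀ + ρ' • e₁ ∈ V := by
    intro ρ' hρ'
    apply hr₀sub
    rw [Metric.mem_ball, dist_eq_norm]
    have hx : x₀ + ρ' • e₁ - x₀ = ρ' • e₁ := by abel
    rw [hx, norm_smul, he₁norm, mul_one, Real.norm_eq_abs, abs_of_nonneg hρ'.1]
    calc ρ' ≤ s₀ := hρ'.2
      _ < r₀ := by rw [hs₀def]; linarith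
  -- mean value inequality
  have hMVT : ∀ t ∈ Set.Ioo 0 δ,
      ε₁ / 2 * s₀ ≤ s * F (x₀ + s₀ • e₁) (c (x₀ + s₀ • e₁) t) - s * F x₀ (c x₀ t) := by
    intro t ht
    set g : ℝ → ℝ :=
      fun ρ' => s * F (x₀ + ρ' • e₁) (c (x₀ + ρ' • e₁) t) - ε₁ / 2 * ρ' with hgdef
    have hder : ∀ ρ' ∈ Set.Icc (0 : ℝ) s₀, ∃ G : ℝ, HasDerivAt g G ρ' ∧ 0 ≤ G := by
      intro ρ' hρ'
      obtain ⟨D, hD, hDe⟩ := hkey2 _ (hseg ρ' hρ') t ht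
      have hline : HasDerivAt (fun ρ'' : ℝ => x₀ + ρ'' • e₁) e₁ ρ' := by
        simpa using ((hasDerivAt_id ρ').smul_const e₁).const_add x₀
      have hφ : HasDerivAt (fun ρ'' : ℝ => F (x₀ + ρ'' • e₁) (c (x₀ + ρ'' • e₁) t))
          (D e₁) ρ' := (hD.comp_hasDerivAt ρ' hline :)
      refine ⟨s * D e₁ - ε₁ / 2, ?_, by linarith⟩
      exact (hφ.const_mul s).sub (by simpa using (hasDerivAt_id ρ').const_mul (ε₁ / 2))
    have hmono : MonotoneOn g (Set.Icc 0 s₀) := by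
      apply monotoneOn_of_deriv_nonneg (convex_Icc 0 s₀)
      · intro ρ' hρ'
        obtain ⟨G, hG, -⟩ := hder ρ' hρ'
        exact hG.continuousAt.continuousWithinAt
      · intro ρ' hρ'
        obtain ⟨G, hG, -⟩ := hder ρ' (interior_subset hρ')
        exact hG.differentiableAt.differentiableWithinAt
      · intro ρ' hρ'
        obtain ⟨G, hG, hG0⟩ := hder ρ' (interior_subset hρ')
        rw [hG.deriv]
        exact hG0
    have hg01 := hmono (Set.left_mem_Icc.2 hs₀pos.le) (Set.right_mem_Icc.2 hs₀pos.le) hs₀pos.le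
    have hg0 : g 0 = s * F x₀ (c x₀ t) := by
      simp [hgdef]
    have hgs : g s₀ = s * F (x₀ + s₀ • e₁) (c (x₀ + s₀ • e₁) t) - ε₁ / 2 * s₀ := rfl
    rw [hg0, hgs] at hg01
    linarith
  -- pass to the limit `t → 0⁺`
  set y₀ : Fin (d + 1) → ℝ := x₀ + s₀ • e₁ with hy₀def
  have hy₀V : y₀ ∈ V := hseg s₀ (Set.right_mem_Icc.2 hs₀pos.le)
  have hlim : ∀ x ∈ U, Filter.Tendsto (fun t => F x (c x t))
      (nhdsWithin 0 (Set.Ioo 0 δ)) (nhds 0) := by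
    intro x hx
    have h0D : ((0 : Fin e → ℝ)) ∈ euclDisk 0 1 := by
      simp [euclDisk, euclNorm_zero]
    have hin : ContinuousWithinAt (fun t : ℝ => ((x, c x t) : (Fin (d + 1) → ℝ) × (Fin e → ℝ)))
        (Set.Ico 0 a) 0 := by
      refine ContinuousWithinAt.prodMk continuousWithinAt_const ?_
      have hmt : Set.MapsTo (fun t : ℝ => ((x, t) : (Fin (d + 1) → ℝ) × ℝ))
          (Set.Ico 0 a) (U ×ˢ Set.Ico 0 a) := fun t ht => ⟨hx, ht⟩
      have hcx : ContinuousOn (fun t : ℝ => c x t) (Set.Ico 0 a) :=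
        hcc.comp (Continuous.continuousOn (by fun_prop)) hmt
      exact hcx 0 (Set.left_mem_Ico.2 ha)
    have hFcw' : ContinuousWithinAt Ft (U ×ˢ euclDisk 0 1) (x, c x 0) := by
      rw [hc0 x hx]
      exact hFc (x, (0 : Fin e → ℝ)) ⟨hx, h0D⟩
    have hmapsto : Set.MapsTo (fun t : ℝ => ((x, c x t) : (Fin (d + 1) → ℝ) × (Fin e → ℝ)))
        (Set.Ico 0 a) (U ×ˢ euclDisk 0 1) := fun t ht => ⟨hx, hcD x hx t ht⟩
    have hcomp : ContinuousWithinAt (fun t : ℝ => F x (c x t)) (Set.Ico 0 a) 0 :=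
      ContinuousWithinAt.comp (g := Ft)
        (f := fun t : ℝ => ((x, c x t) : (Fin (d + 1) → ℝ) × (Fin e → ℝ)))
        hFcw' hin hmapsto
    have h0 : F x (c x 0) = 0 := by
      rw [hc0 x hx]
      exact hF0 x hx
    have hfin : Filter.Tendsto (fun t : ℝ => F x (c x t)) (nhdsWithin 0 (Set.Ico 0 a))
        (nhds (F x (c x 0))) := hcomp
    rw [h0] at hfin
    exact hfin.mono_left
      (nhdsWithin_mono _ (fun t ht => ⟨ht.1.le, lt_of_lt_of_le ht.2 hδa⟩))
  have hNB : (nhdsWithin (0 : ℝ) (Set.Ioo 0 δ)).NeBot :=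
    mem_closure_iff_nhdsWithin_neBot.mp
      (by rw [closure_Ioo hδpos.ne]; exact ⟨le_rfl, hδpos.le⟩)
  have hΦ : Filter.Tendsto (fun t => s * F y₀ (c y₀ t) - s * F x₀ (c x₀ t))
      (nhdsWithin 0 (Set.Ioo 0 δ)) (nhds 0) := by
    have h1 := (hlim y₀ hy₀V.1).const_mul s
    have h2 := (hlim x₀ hx₀U).const_mul s
    simpa using h1.sub h2
  have hfin : ε₁ / 2 * s₀ ≤ 0 := by
    refine ge_of_tendsto hΦ ?_
    filter_upwards [self_mem_nhdsWithin] with t ht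
    exact hMVT t ht
  have : 0 < ε₁ / 2 * s₀ := by positivity
  linarith
end
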